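/- Let R be a commutative Noetherian ring, I an injective R-module, and F a flat R-module. Then the tensor product I ⊗_R F is an injective R-module. -/

import Mathlib

/-!
By Baer's criterion it suffices to extend maps `J → I ⊗ F` from ideals `J` to `R`. Over a
Noetherian ring `J` is finitely presented, and for finitely presented `M` and flat `F` the natural
map `Hom(M, I) ⊗ F → Hom(M, I ⊗ F)` is bijective: it is for finite free `M`, and both sides are
left exact in a presentation `R^m → R^n → M → 0` because `F` is flat. So restriction
`Hom(R, I ⊗ F) → Hom(J, I ⊗ F)` is identified with `(Hom(R, I) → Hom(J, I)) ⊗ F`, which is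
surjective because `I` is injective.
-/

universe u

open TensorProduct LinearMap

section HomTensor

variable {R : Type*} [CommRing R] {M N P Q : Type*} [AddCommGroup M] [Module R M]
  [AddCommGroup N] [Module R N] [AddCommGroup P] [Module R P] [AddCommGroup Q] [Module R Q]

lemma rTensorHomToHomRTensor_comp_rTensor_lcomp (ψ : M →ₗ[R] N) :
    rTensorHomToHomRTensor (.id R) M P Q ∘ₗ (lcomp R P ψ).rTensor Q =
      lcomp R (P ⊗[R] Q) ψ ∘ₗ rTensorHomToHomRTensor (.id R) N P Q := by
  ext φ q m
  simp [rTensorHomToHomRTensor_apply]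

lemma rTensorHomToHomRTensor_bijective_of_projective [Module.Projective R M] [Module.Finite R M] :
    Function.Bijective (rTensorHomToHomRTensor (.id R) M P Q) := by
  rw [← rTensorHomEquivHomRTensor_toLinearMap]
  exact (rTensorHomEquivHomRTensor R M P Q).bijective

lemma rTensorHomToHomRTensor_bijective [Module.FinitePresentation R M] [Module.Flat R Q] :
    Function.Bijective (rTensorHomToHomRTensor (.id R) M P Q) := by
  obtain ⟨n, m, f, g, hf, hgf⟩ := Module.FinitePresentation.exists_fin' R M
  have hlcomp_inj := lcomp_injective_of_surjective (S := R) (N := P) f hf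
  have hlcomp_exact := exact_lcomp_of_exact_of_surjective P hgf hf
  exact bijective_of_bijective_of_injective_of_left_exact
    ((lcomp R P f).rTensor Q) ((lcomp R P g).rTensor Q) (lcomp R (P ⊗[R] Q) f)
    (lcomp R (P ⊗[R] Q) g) _ _ _
    (rTensorHomToHomRTensor_comp_rTensor_lcomp f).symm
    (rTensorHomToHomRTensor_comp_rTensor_lcomp g).symm
    (Module.Flat.rTensor_exact Q hlcomp_exact)
    (exact_lcomp_of_exact_of_surjective _ hgf hf)
    rTensorHomToHomRTensor_bijective_of_projective
    rTensorHomToHomRTensor_bijective_of_projective.1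
    (Module.Flat.rTensor_preserves_injective_linearMap _ hlcomp_inj)
    (lcomp_injective_of_surjective f hf)

end HomTensor

lemma Module.baer_iff_surjective_lcomp {R Q : Type*} [CommRing R] [AddCommGroup Q] [Module R Q] :
    Module.Baer R Q ↔ ∀ J : Ideal R, Function.Surjective (lcomp R Q J.subtype) := by
  simp_rw [Module.Baer, Function.Surjective, DFunLike.ext_iff, Subtype.forall, lcomp_apply,
    Submodule.subtype_apply]

theorem injective_tensorProduct_flat (R : Type u) [CommRing R] [IsNoetherianRing R]
    (I F : Type u) [AddCommGroup I] [Module R I] [AddCommGroup F] [Module R F]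
    (hI : Module.Injective R I) (hF : Module.Flat R F) :
    Module.Injective R (TensorProduct R I F) := by
  refine Module.Baer.injective (Module.baer_iff_surjective_lcomp.2 fun J ↦ ?_)
  have := Module.finitePresentation_of_finite R J
  have hrestrict : Function.Surjective ((lcomp R I J.subtype).rTensor F) :=
    rTensor_surjective F (Module.baer_iff_surjective_lcomp.1 (Module.Baer.of_injective hI) J)
  have hcomp := rTensorHomToHomRTensor_bijective.2.comp hrestrict
  rw [← coe_comp, rTensorHomToHomRTensor_comp_rTensor_lcomp, coe_comp] at hcomp
  exact hcomp.of_comp
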